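/- Principal-value vanishing of the second-order current contribution: for the Weyl matrix elements D^k_{+−}(ω) = ⟨Ψ_+(ω), ½σ_k Ψ_−(ω)⟩ and any fixed vector v ∈ ℝ³ and 0 < r₁ < r₂ < ∞, the integral ∫_{{r₁ < |p| < r₂}} (v · Im(D_{+−}(p/|p|) D^k_{−+}(p/|p|))) / |p|² dp = 0 for each k, where Im is taken componentwise; consequently the principal value integral over ℝ³ of the same integrand is zero. -/

import Mathlib

/-!
Writing `P₊(ω)` and `P₋(ω)` for the projectors `Ψ₊Ψ₊*` and `Ψ₋Ψ₋*`, the product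
`D^j_{+−} D^k_{−+} = tr (P₊ ½σ_j P₋ ½σ_k)` does not depend on the phases of `Ψ_±`, and
`P_±(ω) = ½(1 ± ω·σ)`. Hence `ω ↦ −ω` swaps `P₊` and `P₋`, which by hermiticity of the Pauli
matrices conjugates the trace. The imaginary part is therefore odd on the sphere, the integrand is
odd on `ℝ³`, and its integral over any shell `{s < |p| < t}` vanishes; the principal-value
sequence is identically zero.
-/

open Matrix Complex MeasureTheory Filter

noncomputable section

def pauli : Fin 3 → Matrix (Fin 2) (Fin 2) ℂ :=
  ![!![0, 1; 1, 0], !![0, -Complex.I; Complex.I, 0], !![1, 0; 0, -1]]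

namespace MeasureTheory

variable {E F : Type*} [MeasurableSpace E] [AddGroup E] [MeasurableNeg E]
  [NormedAddCommGroup F] [NormedSpace ℝ F]

theorem integral_eq_zero_of_odd (μ : Measure E) [μ.IsNegInvariant] {f : E → F}
    (hf : Function.Odd f) : ∫ x, f x ∂μ = 0 := by
  have : IsAddTorsionFree F := .of_isTorsionFree ℝ F
  simp_rw [← self_eq_neg, ← integral_neg, ← hf.eq, integral_neg_eq_self]

theorem setIntegral_eq_zero_of_odd (μ : Measure E) [μ.IsNegInvariant] {f : E → F}
    (hf : Function.Odd f) {s : Set E} (hs : MeasurableSet s) (hs_neg : -s = s) :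
    ∫ x in s, f x ∂μ = 0 := by
  rw [← integral_indicator hs]
  refine integral_eq_zero_of_odd μ fun x => ?_
  by_cases hx : x ∈ s
  · have : -x ∈ s := by rw [← hs_neg]; simpa using hx
    simp [hx, this, hf.eq]
  · have : -x ∉ s := by rw [← hs_neg]; simpa using hx
    simp [hx, this]

end MeasureTheory

theorem odd_div_norm_pow_of_odd_on_sphere {E : Type*} [NormedAddCommGroup E]
    [NormedSpace ℝ E] {g : E → ℝ} (hg : ∀ ω, ‖ω‖ = 1 → g (-ω) = -g ω) {n : ℕ} (hn : n ≠ 0) :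
    Function.Odd fun p : E => g (‖p‖⁻¹ • p) / ‖p‖ ^ n := by
  intro p
  rcases eq_or_ne p 0 with rfl | hp
  · simp [hn]
  · dsimp only
    rw [norm_neg, smul_neg, hg _ (by simp [norm_smul, hp]), neg_div]

namespace Matrix

variable {n R : Type*} [CommRing R] [StarRing R]

theorem isHermitian_vecMulVec_star (ψ : n → R) : (vecMulVec ψ (star ψ)).IsHermitian := by
  rw [IsHermitian, conjTranspose_vecMulVec, star_star]

variable [Fintype n]

theorem dotProduct_mulVec_mul_star_eq_trace (ψ φ : n → R) (S T : Matrix n n R) :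
    (star ψ ⬝ᵥ S *ᵥ φ) * star (star ψ ⬝ᵥ T *ᵥ φ) =
      trace (vecMulVec ψ (star ψ) * S * vecMulVec φ (star φ) * Tᴴ) := by
  rw [Matrix.mul_assoc, vecMulVec_mul, vecMulVec_mul, vecMulVec_mul (x := φ), vecMul_vecMulVec,
    trace_vecMulVec, dotProduct_smul, smul_eq_mul, ← dotProduct_mulVec,
    ← star_dotProduct (T *ᵥ φ) ψ, star_mulVec, dotProduct_comm ψ]

theorem star_trace_mul_mul_mul {P Q S T : Matrix n n R} (hP : P.IsHermitian)
    (hQ : Q.IsHermitian) (hS : S.IsHermitian) (hT : T.IsHermitian) :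
    star (trace (P * S * Q * T)) = trace (Q * S * P * T) := by
  rw [← trace_conjTranspose]
  simp only [conjTranspose_mul, hP.eq, hQ.eq, hS.eq, hT.eq, Matrix.mul_assoc]
  rw [trace_mul_comm]
  simp only [Matrix.mul_assoc]

theorem dotProduct_mulVec_mul_star_of_vecMulVec_swap {ψ φ ψ' φ' : n → R}
    (hψ' : vecMulVec ψ' (star ψ') = vecMulVec φ (star φ))
    (hφ' : vecMulVec φ' (star φ') = vecMulVec ψ (star ψ))
    {S T : Matrix n n R} (hS : S.IsHermitian) (hT : T.IsHermitian) :
    (star ψ' ⬝ᵥ S *ᵥ φ') * star (star ψ' ⬝ᵥ T *ᵥ φ') =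
      star ((star ψ ⬝ᵥ S *ᵥ φ) * star (star ψ ⬝ᵥ T *ᵥ φ)) := by
  rw [dotProduct_mulVec_mul_star_eq_trace, dotProduct_mulVec_mul_star_eq_trace, hψ', hφ', hT.eq,
    star_trace_mul_mul_mul (isHermitian_vecMulVec_star ψ) (isHermitian_vecMulVec_star φ) hS hT]

end Matrix

def pauliDot (ω : EuclideanSpace ℝ (Fin 3)) : Matrix (Fin 2) (Fin 2) ℂ :=
  ∑ i, ((ω i : ℝ) : ℂ) • pauli i

theorem pauliDot_eq (ω : EuclideanSpace ℝ (Fin 3)) :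
    pauliDot ω = !![(ω 2 : ℂ), ω 0 - ω 1 * I; ω 0 + ω 1 * I, -ω 2] := by
  ext i j
  fin_cases i <;> fin_cases j <;> simp [pauliDot, pauli, Fin.sum_univ_three]; ring

theorem pauliDot_neg (ω : EuclideanSpace ℝ (Fin 3)) : pauliDot (-ω) = -pauliDot ω := by
  simp [pauliDot, ← Finset.sum_neg_distrib]

theorem pauliDot_neg_mulVec_of_mulVec_eq_neg {ω : EuclideanSpace ℝ (Fin 3)} {ψ : Fin 2 → ℂ}
    (h : pauliDot ω *ᵥ ψ = -ψ) : pauliDot (-ω) *ᵥ ψ = ψ := by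
  rw [pauliDot_neg, neg_mulVec, h, neg_neg]

theorem isHermitian_pauli (k : Fin 3) : (pauli k).IsHermitian := by
  ext i j
  fin_cases k <;> fin_cases i <;> fin_cases j <;> simp [pauli]

open ComplexConjugate in
theorem vecMulVec_star_eq_of_pauliDot_mulVec_eq_self {ω : EuclideanSpace ℝ (Fin 3)}
    (hω : ‖ω‖ = 1) {ψ : Fin 2 → ℂ} (hψ : star ψ ⬝ᵥ ψ = 1) (heig : pauliDot ω *ᵥ ψ = ψ) :
    vecMulVec ψ (star ψ) = (1 / 2 : ℂ) • (1 + pauliDot ω) := by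
  have hsq : (ω 0 : ℂ) ^ 2 + (ω 1 : ℂ) ^ 2 + (ω 2 : ℂ) ^ 2 = 1 := by
    have := EuclideanSpace.real_norm_sq_eq ω
    rw [hω, one_pow, Fin.sum_univ_three] at this
    exact_mod_cast this.symm
  rw [pauliDot_eq] at heig ⊢
  have e₀ := congrFun heig 0
  have e₁ := congrFun heig 1
  simp only [mulVec, dotProduct, Fin.isValue, of_apply, cons_val', cons_val_fin_one, cons_val_zero,
    Fin.sum_univ_two, cons_val_one, neg_mul, Pi.star_apply, RCLike.star_def] at e₀ e₁ hψ
  have e₀c := congrArg conj e₀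
  have e₁c := congrArg conj e₁
  simp only [map_add, map_mul, map_sub, map_neg, conj_ofReal, conj_I, mul_neg, sub_neg_eq_add]
    at e₀c e₁c
  -- `(1 - ω₃)|ψ₀|²` and `(1 + ω₃)|ψ₁|²` are read off the eigen-equations and add up without
  -- dividing, so the poles `ω₃ = ±1` need no separate treatment.
  ext i j
  fin_cases i <;> fin_cases j <;> simp [vecMulVec] <;> grind

theorem transition_mul_star_neg {Ψp Ψm : EuclideanSpace ℝ (Fin 3) → Fin 2 → ℂ}
    (hnormp : ∀ ω : EuclideanSpace ℝ (Fin 3), ‖ω‖ = 1 → star (Ψp ω) ⬝ᵥ Ψp ω = 1)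
    (hnormm : ∀ ω : EuclideanSpace ℝ (Fin 3), ‖ω‖ = 1 → star (Ψm ω) ⬝ᵥ Ψm ω = 1)
    (heigp : ∀ ω : EuclideanSpace ℝ (Fin 3), ‖ω‖ = 1 → pauliDot ω *ᵥ Ψp ω = Ψp ω)
    (heigm : ∀ ω : EuclideanSpace ℝ (Fin 3), ‖ω‖ = 1 → pauliDot ω *ᵥ Ψm ω = -(Ψm ω))
    {ω : EuclideanSpace ℝ (Fin 3)} (hω : ‖ω‖ = 1)
    {S T : Matrix (Fin 2) (Fin 2) ℂ} (hS : S.IsHermitian) (hT : T.IsHermitian) :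
    (star (Ψp (-ω)) ⬝ᵥ S *ᵥ Ψm (-ω)) * star (star (Ψp (-ω)) ⬝ᵥ T *ᵥ Ψm (-ω)) =
      star ((star (Ψp ω) ⬝ᵥ S *ᵥ Ψm ω) * star (star (Ψp ω) ⬝ᵥ T *ᵥ Ψm ω)) := by
  have hω' : ‖-ω‖ = 1 := by rwa [norm_neg]
  refine dotProduct_mulVec_mul_star_of_vecMulVec_swap ?_ ?_ hS hT
  · rw [vecMulVec_star_eq_of_pauliDot_mulVec_eq_self hω' (hnormp _ hω') (heigp _ hω'),
      vecMulVec_star_eq_of_pauliDot_mulVec_eq_self hω' (hnormm _ hω)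
        (pauliDot_neg_mulVec_of_mulVec_eq_neg (heigm _ hω))]
  · rw [vecMulVec_star_eq_of_pauliDot_mulVec_eq_self hω (hnormm _ hω') (by
        simpa only [neg_neg] using pauliDot_neg_mulVec_of_mulVec_eq_neg (heigm _ hω')),
      vecMulVec_star_eq_of_pauliDot_mulVec_eq_self hω (hnormp _ hω) (heigp _ hω)]

theorem pv_second_order_current_vanishes_general
    (Ψp Ψm : EuclideanSpace ℝ (Fin 3) → (Fin 2 → ℂ))
    (hnormp : ∀ ω : EuclideanSpace ℝ (Fin 3), ‖ω‖ = 1 → star (Ψp ω) ⬝ᵥ Ψp ω = 1)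
    (hnormm : ∀ ω : EuclideanSpace ℝ (Fin 3), ‖ω‖ = 1 → star (Ψm ω) ⬝ᵥ Ψm ω = 1)
    (heigp : ∀ ω : EuclideanSpace ℝ (Fin 3), ‖ω‖ = 1 →
      (∑ i, ((ω i : ℝ) : ℂ) • pauli i) *ᵥ Ψp ω = Ψp ω)
    (heigm : ∀ ω : EuclideanSpace ℝ (Fin 3), ‖ω‖ = 1 →
      (∑ i, ((ω i : ℝ) : ℂ) • pauli i) *ᵥ Ψm ω = -(Ψm ω))
    (D : Fin 3 → EuclideanSpace ℝ (Fin 3) → ℂ)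
    (hD : ∀ k ω, D k ω = star (Ψp ω) ⬝ᵥ ((((1:ℂ)/2) • pauli k) *ᵥ Ψm ω))
    (v : Fin 3 → ℝ) (r₁ r₂ : ℝ) :
    (∀ k : Fin 3,
      (∫ p in {p : EuclideanSpace ℝ (Fin 3) | r₁ < ‖p‖ ∧ ‖p‖ < r₂},
          (∑ j, v j * (D j (‖p‖⁻¹ • p) * starRingEnd ℂ (D k (‖p‖⁻¹ • p))).im) / ‖p‖^2)
        = 0) ∧
    (∀ k : Fin 3,
      Tendsto (fun n : ℕ =>
          ∫ p in {p : EuclideanSpace ℝ (Fin 3) | 1 / (n + 1 : ℝ) < ‖p‖ ∧ ‖p‖ < (n + 1 : ℝ)},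
            (∑ j, v j * (D j (‖p‖⁻¹ • p) * starRingEnd ℂ (D k (‖p‖⁻¹ • p))).im) / ‖p‖^2)
        atTop (nhds 0)) := by
  have hS (k : Fin 3) : ((1 / 2 : ℂ) • pauli k).IsHermitian :=
    (isHermitian_pauli k).smul (by simp [IsSelfAdjoint])
  let g (k : Fin 3) (ω : EuclideanSpace ℝ (Fin 3)) : ℝ :=
    ∑ j, v j * (D j ω * starRingEnd ℂ (D k ω)).im
  have hodd (k : Fin 3) (ω : EuclideanSpace ℝ (Fin 3)) (hω : ‖ω‖ = 1) : g k (-ω) = -g k ω := by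
    simp only [g, hD, ← Finset.sum_neg_distrib, ← mul_neg, ← Complex.conj_im, ← Complex.star_def,
      transition_mul_star_neg hnormp hnormm heigp heigm hω (hS _) (hS k)]
  have hshell (k : Fin 3) (s t : ℝ) :
      ∫ p in {p : EuclideanSpace ℝ (Fin 3) | s < ‖p‖ ∧ ‖p‖ < t},
        (∑ j, v j * (D j (‖p‖⁻¹ • p) * starRingEnd ℂ (D k (‖p‖⁻¹ • p))).im) / ‖p‖^2 = 0 := by
    refine setIntegral_eq_zero_of_odd volume
      (odd_div_norm_pow_of_odd_on_sphere (hodd k) two_ne_zero)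
      (measurable_norm measurableSet_Ioo) ?_
    ext p
    simp
  exact ⟨fun k => hshell k r₁ r₂, fun k => by simp only [hshell]; exact tendsto_const_nhds⟩

/-- principal-value vanishing of the second-order current contribution.
For the Weyl matrix elements `D^k_{+−}(ω) = ⟨Ψ_+(ω), ½σ_k Ψ_−(ω)⟩`, any `v ∈ ℝ³` and
`0 < r₁ < r₂ < ∞`, the shell integral
`∫_{r₁<|p|<r₂} v·Im(D_{+−}(p/|p|) D^k_{−+}(p/|p|)) / |p|² dp` vanishes for each `k`;
consequently the principal value over `ℝ³` of the same integrand is zero. -/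
theorem pv_second_order_current_vanishes
    (Ψp Ψm : EuclideanSpace ℝ (Fin 3) → (Fin 2 → ℂ))
    (hmeasp : Measurable Ψp) (hmeasm : Measurable Ψm)
    (hnormp : ∀ ω : EuclideanSpace ℝ (Fin 3), ‖ω‖ = 1 → star (Ψp ω) ⬝ᵥ Ψp ω = 1)
    (hnormm : ∀ ω : EuclideanSpace ℝ (Fin 3), ‖ω‖ = 1 → star (Ψm ω) ⬝ᵥ Ψm ω = 1)
    (heigp : ∀ ω : EuclideanSpace ℝ (Fin 3), ‖ω‖ = 1 →
      (∑ i, ((ω i : ℝ) : ℂ) • pauli i) *ᵥ Ψp ω = Ψp ω)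
    (heigm : ∀ ω : EuclideanSpace ℝ (Fin 3), ‖ω‖ = 1 →
      (∑ i, ((ω i : ℝ) : ℂ) • pauli i) *ᵥ Ψm ω = -(Ψm ω))
    (D : Fin 3 → EuclideanSpace ℝ (Fin 3) → ℂ)
    (hD : ∀ k ω, D k ω = star (Ψp ω) ⬝ᵥ ((((1:ℂ)/2) • pauli k) *ᵥ Ψm ω))
    (v : Fin 3 → ℝ) (r₁ r₂ : ℝ) (h₁ : 0 < r₁) (h₁₂ : r₁ < r₂) :
    (∀ k : Fin 3,
      (∫ p in {p : EuclideanSpace ℝ (Fin 3) | r₁ < ‖p‖ ∧ ‖p‖ < r₂},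
          (∑ j, v j * (D j (‖p‖⁻¹ • p) * starRingEnd ℂ (D k (‖p‖⁻¹ • p))).im) / ‖p‖^2)
        = 0) ∧
    (∀ k : Fin 3,
      Tendsto (fun n : ℕ =>
          ∫ p in {p : EuclideanSpace ℝ (Fin 3) | 1 / (n + 1 : ℝ) < ‖p‖ ∧ ‖p‖ < (n + 1 : ℝ)},
            (∑ j, v j * (D j (‖p‖⁻¹ • p) * starRingEnd ℂ (D k (‖p‖⁻¹ • p))).im) / ‖p‖^2)
        atTop (nhds 0)) :=
  pv_second_order_current_vanishes_general Ψp Ψm hnormp hnormm heigp heigm D hD v r₁ r₂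

end
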